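/- Let 0 < μ < N, λ ∈ ℝ, Σ_λ = {x₁ < λ}, R_λ the reflection across {x₁=λ}, and Γ ⊂ {x₁ = 0} measurable with λ < 0 (so Γ ⊂ Σ_λᶜ and R_λ(Γ) ⊂ Σ_λ). Let u : ℝ^N → ℝ be measurable with F(u) integrable against the Riesz kernels involved, and set u_λ(x) = u(R_λ x), v(x) = ∫_{ℝ^N \ Γ} F(u(y))/|x-y|^μ dy, v_λ(x) = v(R_λ x). Then v(x) - v_λ(x) = ∫_{Σ_λ \ R_λ(Γ)} (F(u(y)) - F(u_λ(y))) · (1/|x-y|^μ - 1/|x_λ - y|^μ) dy. -/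

import Mathlib

/-!
Since `Γ` lies in a hyperplane, both `Γ` and `R_λ(Γ)` are Lebesgue-null, so they can be ignored.
The reflection `R_λ` is a measure-preserving involutive isometry exchanging `Σ_λ` with its
complement up to the null hyperplane `{x₁ = λ}`; folding the integral over `Σ_λᶜ` back onto `Σ_λ`
and using `|x - R_λ y| = |x_λ - y|`, `|x_λ - R_λ y| = |x - y|` gives the formula.
-/

open MeasureTheory

/-- Reflection of the first coordinate across the hyperplane `x₁ = λ`. -/
noncomputable def reflHyp {N : ℕ} (l : ℝ) (x : EuclideanSpace ℝ (Fin N)) :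
    EuclideanSpace ℝ (Fin N) :=
  WithLp.toLp 2 (fun i => if (i : ℕ) = 0 then 2 * l - x i else x i)

/-- The half space `Σ_λ = {x : x₁ < λ}`. -/
def halfSpace (N : ℕ) (hN : 1 ≤ N) (l : ℝ) : Set (EuclideanSpace ℝ (Fin N)) :=
  {x | x ⟨0, by omega⟩ < l}

open Function

theorem MeasureTheory.MeasurePreserving.integral_eq_setIntegral_add_comp
    {α E : Type*} [MeasurableSpace α] [NormedAddCommGroup E] [NormedSpace ℝ E]
    {μ : Measure α} {R : α → α} {S : Set α}
    (hR : MeasurePreserving R μ μ) (hinv : Involutive R) (hS : MeasurableSet S)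
    (hswap : R ⁻¹' Sᶜ =ᵐ[μ] S) {g : α → E} (hg : Integrable g μ) :
    ∫ y, g y ∂μ = ∫ y in S, (g y + g (R y)) ∂μ := by
  have hemb : MeasurableEmbedding R :=
    (MeasurableEquiv.ofInvolutive R hinv hR.measurable).measurableEmbedding
  have hgR : Integrable (g ∘ R) μ := (hR.integrable_comp_emb hemb).mpr hg
  calc ∫ y, g y ∂μ = (∫ y in S, g y ∂μ) + ∫ y in Sᶜ, g y ∂μ := (integral_add_compl hS hg).symm
    _ = (∫ y in S, g y ∂μ) + ∫ y in S, g (R y) ∂μ := by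
        rw [← hR.setIntegral_preimage_emb hemb g Sᶜ, setIntegral_congr_set hswap]
    _ = ∫ y in S, (g y + g (R y)) ∂μ := (integral_add hg.integrableOn hgR.integrableOn).symm

theorem EuclideanSpace.volume_setOf_apply_eq {N : ℕ} (i : Fin N) (c : ℝ) :
    volume {x : EuclideanSpace ℝ (Fin N) | x i = c} = 0 := by
  have hT : MeasurableSet {f : Fin N → ℝ | f i = c} :=
    measurableSet_eq_fun (measurable_pi_apply i) measurable_const
  rw [show {x : EuclideanSpace ℝ (Fin N) | x i = c}
      = (MeasurableEquiv.toLp 2 (Fin N → ℝ)).symm ⁻¹' {f | f i = c} from rfl,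
    (EuclideanSpace.volume_preserving_symm_measurableEquiv_toLp (Fin N)).measure_preimage
      hT.nullMeasurableSet, volume_pi]
  exact Measure.pi_hyperplane (fun _ : Fin N => (volume : Measure ℝ)) i c

noncomputable def negFirstCoord (N : ℕ) :
    EuclideanSpace ℝ (Fin N) ≃ₗᵢ[ℝ] EuclideanSpace ℝ (Fin N) :=
  LinearIsometryEquiv.piLpCongrRight 2 fun i =>
    if (i : ℕ) = 0 then LinearIsometryEquiv.neg ℝ else LinearIsometryEquiv.refl ℝ ℝ

theorem negFirstCoord_apply {N : ℕ} (x : EuclideanSpace ℝ (Fin N)) (i : Fin N) :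
    negFirstCoord N x i = if (i : ℕ) = 0 then -x i else x i := by
  by_cases h : (i : ℕ) = 0 <;> simp [negFirstCoord, h]

section reflHyp

variable {N : ℕ} (l : ℝ)

theorem reflHyp_apply (x : EuclideanSpace ℝ (Fin N)) (i : Fin N) :
    reflHyp l x i = if (i : ℕ) = 0 then 2 * l - x i else x i := rfl

theorem reflHyp_involutive : Involutive (reflHyp (N := N) l) := by
  intro x
  ext i
  by_cases h : (i : ℕ) = 0 <;> simp [reflHyp_apply, h]

theorem reflHyp_sub_reflHyp (a b : EuclideanSpace ℝ (Fin N)) :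
    reflHyp l a - reflHyp l b = negFirstCoord N (a - b) := by
  ext i
  by_cases h : (i : ℕ) = 0 <;> simp [reflHyp_apply, negFirstCoord_apply, h]
  ring

theorem norm_reflHyp_sub_reflHyp (a b : EuclideanSpace ℝ (Fin N)) :
    ‖reflHyp l a - reflHyp l b‖ = ‖a - b‖ := by
  rw [reflHyp_sub_reflHyp, LinearIsometryEquiv.norm_map]

theorem norm_sub_reflHyp (a b : EuclideanSpace ℝ (Fin N)) :
    ‖a - reflHyp l b‖ = ‖reflHyp l a - b‖ := by
  conv_lhs => rw [← reflHyp_involutive l a]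
  exact norm_reflHyp_sub_reflHyp l _ b

theorem measurePreserving_reflHyp : MeasurePreserving (reflHyp (N := N) l) volume volume := by
  have hR : reflHyp (N := N) l = (reflHyp l 0 + ·) ∘ negFirstCoord N := by
    ext1 x
    exact eq_add_of_sub_eq' (by rw [reflHyp_sub_reflHyp, sub_zero])
  rw [hR]
  exact (measurePreserving_add_left volume _).comp (negFirstCoord N).measurePreserving

theorem measurableSet_halfSpace (hN : 1 ≤ N) : MeasurableSet (halfSpace N hN l) :=
  measurableSet_lt ((measurable_pi_apply _).comp (WithLp.measurable_ofLp 2 _)) measurable_const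

theorem reflHyp_preimage_compl_halfSpace_ae_eq (hN : 1 ≤ N) :
    reflHyp l ⁻¹' (halfSpace N hN l)ᶜ =ᵐ[volume] halfSpace N hN l := by
  have hplane := EuclideanSpace.volume_setOf_apply_eq (⟨0, by omega⟩ : Fin N) l
  refine (ae_eq_set.mpr ⟨?_, ?_⟩) <;> refine measure_mono_null (fun y hy => ?_) hplane <;>
    simp only [halfSpace, Set.mem_sdiff, Set.mem_preimage, Set.mem_compl_iff, Set.mem_ofPred_eq,
      reflHyp_apply, if_true, not_lt] at hy ⊢ <;>
    linarith [hy.1, hy.2]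

end reflHyp

theorem stmt_9 (N : ℕ) (hN : 1 ≤ N) (μ l : ℝ)
    (Γ : Set (EuclideanSpace ℝ (Fin N)))
    (hΓhyp : Γ ⊆ {x | x ⟨0, by omega⟩ = (0 : ℝ)})
    (u : EuclideanSpace ℝ (Fin N) → ℝ) (F : ℝ → ℝ)
    (x : EuclideanSpace ℝ (Fin N))
    (v : EuclideanSpace ℝ (Fin N) → ℝ)
    (hv : ∀ z, v z = ∫ y in Γᶜ, F (u y) / ‖z - y‖ ^ μ)
    (hint1 : IntegrableOn (fun y => F (u y) / ‖x - y‖ ^ μ) Γᶜ)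
    (hint2 : IntegrableOn (fun y => F (u y) / ‖reflHyp l x - y‖ ^ μ) Γᶜ) :
    v x - v (reflHyp l x)
      = ∫ y in halfSpace N hN l \ reflHyp l '' Γ,
          (F (u y) - F (u (reflHyp l y)))
            * (1 / ‖x - y‖ ^ μ - 1 / ‖reflHyp l x - y‖ ^ μ) := by
  set R := reflHyp (N := N) l
  have hR := measurePreserving_reflHyp (N := N) l
  have hΓ0 : volume Γ = 0 := measure_mono_null hΓhyp (EuclideanSpace.volume_setOf_apply_eq _ 0)
  have hRΓ0 : volume (R '' Γ) = 0 := by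
    refine measure_mono_null ?_ (hR.preimage_null hΓ0)
    rintro _ ⟨z, hz, rfl⟩
    simpa [R, reflHyp_involutive l z] using hz
  have hfull : volume.restrict Γᶜ = volume :=
    Measure.restrict_eq_self_of_ae_mem (measure_eq_zero_iff_ae_notMem.mp hΓ0)
  rw [IntegrableOn, hfull] at hint1 hint2
  set g := fun y => F (u y) / ‖x - y‖ ^ μ - F (u y) / ‖R x - y‖ ^ μ
  calc v x - v (R x) = ∫ y, g y := by rw [hv, hv, hfull, integral_sub hint1 hint2]
    _ = ∫ y in halfSpace N hN l, (g y + g (R y)) :=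
        hR.integral_eq_setIntegral_add_comp (reflHyp_involutive l) (measurableSet_halfSpace l hN)
          (reflHyp_preimage_compl_halfSpace_ae_eq l hN) (hint1.sub hint2)
    _ = ∫ y in halfSpace N hN l,
          (F (u y) - F (u (R y))) * (1 / ‖x - y‖ ^ μ - 1 / ‖R x - y‖ ^ μ) := by
        congr 1 with y
        simp only [g, R]
        rw [norm_reflHyp_sub_reflHyp, norm_sub_reflHyp]
        ring
    _ = _ := setIntegral_congr_set
        (sdiff_ae_eq_self.mpr (measure_mono_null Set.inter_subset_right hRΓ0)).symm
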